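/- arXiv:2401.10369 — 3 statements merged into one kernel-verified Lean document; each statement's English description precedes it below -/
import Mathlib

section
/- Let R be a finite set of n = 3f+1 replicas and B ⊆ R with |B| ≤ f. Let V be a type of proposal values and vote : R → Option V record, for each replica, the unique vote it cast in a fixed view (correct replicas vote at most once per view). If there exist subsets Q1, Q2 ⊆ R with |Q1| ≥ 2f+1 and |Q2| ≥ 2f+1 such that vote r = some p for every correct replica r ∈ Q1 \ B and vote r = some p' for every correct replica r ∈ Q2 \ B, then p = p'. In particular, within a single view there cannot exist quorum certificates (PrepareQC or CommitQC, each formed from at least n − f votes) for two different consensus proposals. -/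
/-! Two quorums of size `2f+1` inside `3f+1` replicas share at least `f+1` replicas, so at least
one replica in the intersection is correct; having voted once, it voted both for `p` and `p'`. -/

namespace Finset

variable {α : Type*}

theorem exists_mem_inter_notMem_of_card_add_lt {R B Q₁ Q₂ : Finset α}
    (h₁ : Q₁ ⊆ R) (h₂ : Q₂ ⊆ R) (hcard : #R + #B < #Q₁ + #Q₂) :
    ∃ r ∈ Q₁, r ∈ Q₂ ∧ r ∉ B := by
  classical
  have hunion : #(Q₁ ∪ Q₂) ≤ #R := card_le_card (union_subset h₁ h₂)
  have hinter : #B < #(Q₁ ∩ Q₂) := by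
    have := card_union_add_card_inter Q₁ Q₂
    omega
  obtain ⟨r, hr, hrB⟩ := exists_mem_notMem_of_card_lt_card hinter
  exact ⟨r, mem_of_mem_inter_left hr, mem_of_mem_inter_right hr, hrB⟩

end Finset

theorem no_conflicting_qcs_in_view_general
    {α V : Type*} (f : ℕ) (R B Q1 Q2 : Finset α)
    (vote : α → Option V) (p p' : V)
    (hR : R.card = 3 * f + 1)
    (hB : B.card ≤ f)
    (hQ1R : Q1 ⊆ R) (hQ2R : Q2 ⊆ R)
    (hQ1 : 2 * f + 1 ≤ Q1.card) (hQ2 : 2 * f + 1 ≤ Q2.card)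
    (hvote1 : ∀ r ∈ Q1, r ∉ B → vote r = some p)
    (hvote2 : ∀ r ∈ Q2, r ∉ B → vote r = some p') :
    p = p' := by
  obtain ⟨r, hr₁, hr₂, hrB⟩ :=
    Finset.exists_mem_inter_notMem_of_card_add_lt (B := B) hQ1R hQ2R (by omega)
  exact Option.some_injective _ ((hvote1 r hr₁ hrB).symm.trans (hvote2 r hr₂ hrB))

/-- Within a single view, there cannot exist quorum certificates (each formed
from at least n − f = 2f+1 votes) for two different proposals: if every correct
replica in quorum Q1 voted for p, and every correct replica in quorum Q2 voted
for p', then p = p'. -/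
theorem no_conflicting_qcs_in_view
    {α V : Type*} [DecidableEq α] (f : ℕ) (R B Q1 Q2 : Finset α)
    (vote : α → Option V) (p p' : V)
    (hR : R.card = 3 * f + 1)
    (hBR : B ⊆ R) (hB : B.card ≤ f)
    (hQ1R : Q1 ⊆ R) (hQ2R : Q2 ⊆ R)
    (hQ1 : 2 * f + 1 ≤ Q1.card) (hQ2 : 2 * f + 1 ≤ Q2.card)
    (hvote1 : ∀ r ∈ Q1, r ∉ B → vote r = some p)
    (hvote2 : ∀ r ∈ Q2, r ∉ B → vote r = some p') :
    p = p' :=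
  no_conflicting_qcs_in_view_general f R B Q1 Q2 vote p p' hR hB hQ1R hQ2R hQ1 hQ2 hvote1 hvote2
end

section
/- Let n = 3f+1 and let the replicas be indexed by Fin n, with a faulty set B ⊆ Fin n satisfying |B| ≤ f. Under round-robin leader assignment, where the leader of view v ∈ ℕ is the replica with index v mod n, for every view v there exists a view w with v ≤ w ≤ v + f whose leader is correct (not in B). Hence at most f consecutive view changes are needed before a view led by a correct replica is reached. -/
/-- Under round-robin leader assignment among n = 3f+1 replicas with at most f
faulty, for every view v some view w with v ≤ w ≤ v + f has a correct leader. -/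
theorem round_robin_correct_leader
    (f : ℕ) (B : Finset (Fin (3 * f + 1))) (hB : B.card ≤ f) :
    ∀ v : ℕ, ∃ w : ℕ, v ≤ w ∧ w ≤ v + f ∧ ((Fin.ofNat (3 * f + 1) w) ∉ B) := by
  intro v
  by_contra h
  push_neg at h
  have hall : ∀ i ∈ Finset.range (f + 1), (Fin.ofNat (3 * f + 1) (v + i)) ∈ B := by
    intro i hi
    exact h (v + i) (Nat.le_add_right _ _)
      (by simpa [Finset.mem_range] using Nat.add_le_add_left (Nat.lt_succ_iff.mp (Finset.mem_range.mp hi)) v)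
  have hinj : Set.InjOn (fun i : ℕ => (Fin.ofNat (3 * f + 1) (v + i)))
      (Finset.range (f + 1)) := by
    intro a ha b hb hab
    simp only [Finset.coe_range, Set.mem_Iio] at ha hb
    have h1 : a % (3 * f + 1) = b % (3 * f + 1) := by
      exact Nat.ModEq.add_left_cancel' v (by have := hab; simp [Fin.ext_iff] at this; exact this)
    rw [Nat.mod_eq_of_lt (by omega), Nat.mod_eq_of_lt (by omega)] at h1
    exact h1
  have hcard : f + 1 ≤ B.card := by
    have := Finset.card_le_card_of_injOn _ hall hinj
    simpa using this
  omega
end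

section
/- Let α be a type of data proposals, β a type of digests, digest : α → β an injective function (modeling a collision-resistant hash), and parent : α → β a function giving the parent reference recorded in each proposal. Let k ∈ ℕ and let c, d : Fin (k+1) → α be two chains satisfying parent (c i.succ) = digest (c i.castSucc) and parent (d i.succ) = digest (d i.castSucc) for all i : Fin k. If c k = d k (the two chains have the same tip), then c i = d i for all i; that is, agreement on a lane tip uniquely determines the entire lane history it transitively references. -/
/-- With an injective (collision-resistant) digest, two chains of proposals,
each linked by parent references to the digest of the predecessor, that agree
on their tip agree everywhere: a lane tip uniquely determines its history. -/
theorem tip_determines_history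
    {α β : Type*} (digest : α → β) (hinj : Function.Injective digest)
    (parent : α → β) (k : ℕ) (c d : Fin (k + 1) → α)
    (hc : ∀ i : Fin k, parent (c i.succ) = digest (c i.castSucc))
    (hd : ∀ i : Fin k, parent (d i.succ) = digest (d i.castSucc))
    (htip : c (Fin.last k) = d (Fin.last k)) :
    ∀ i : Fin (k + 1), c i = d i := by
  intro i
  induction i using Fin.reverseInduction with
  | last => exact htip
  | cast i ih =>
    apply hinj
    rw [← hc i, ← hd i, ih]
end
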